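/- arXiv:0809.4908 — 2 statements merged into one kernel-verified Lean document; each statement's English description precedes it below -/
import Mathlib

section
/- For β = 1 and all real a > 0, b > 0, c, d, f, the 3×3 submatrix Ric_1 of Ric(1,a,b,c,d,f) obtained by deleting the first row and first column, namely (1/2)·[[−8a²−b²−c², −cd, bd], [−cd, −8a²−b²−d², −bc], [bd, −bc, −12a²−c²−d²]], is negative definite; consequently Ric(1,a,b,c,d,f) has at least three negative eigenvalues counted with multiplicity. -/
open Matrix Polynomial

noncomputable section

/-- The matrix `Ric(β,a,b,c,d,f)` of the Ricci operator of `A_{4,9}^β` in the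
orthonormal basis of Lemma 1, where `l = 2a(1+β)` and
`r = 4a²(β²+β+1) + c² + d² + f²(1-β)²`. -/
def Ric (β a b c d f : ℝ) : Matrix (Fin 4) (Fin 4) ℝ :=
  (1/2 : ℝ) •
    !![b^2 + c^2 + d^2 - 4*a^2*(1+β)^2,
         -a*c*β + d*f*(1-β) - c*(2*a*(1+β)),
         -d*(a + 2*a*(1+β)),
         0;
       -a*c*β + d*f*(1-β) - c*(2*a*(1+β)),
         -2*a*(2*a*(1+β)) - b^2 - c^2 + f^2*(1-β)^2,
         -c*d - a*f*(1-β)^2 - f*(2*a*(1+β))*(1-β),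
         b*d;
       -d*(a + 2*a*(1+β)),
         -c*d - a*f*(1-β)^2 - f*(2*a*(1+β))*(1-β),
         -4*a^2*β*(1+β) - b^2 - d^2 - f^2*(1-β)^2,
         -b*c;
       0,
         b*d,
         -b*c,
         -(4*a^2*(β^2+β+1) + c^2 + d^2 + f^2*(1-β)^2)]

/-- Auxiliary: the characteristic polynomial is invariant under conjugation. -/
lemma RicAux.charpoly_conj {n : Type*} [Fintype n] [DecidableEq n] {R : Type*} [CommRing R]
    (U A V : Matrix n n R) (h1 : U * V = 1) :
    (U * A * V).charpoly = A.charpoly := by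
  have hmap : U.map C * V.map C = 1 := by
    rw [← Matrix.map_mul, h1, Matrix.map_one C C.map_zero C.map_one]
  have comm := (Matrix.scalar_commute (X : R[X]) (fun r => Commute.all _ _) (U.map C)).eq
  have hc : charmatrix (U * A * V) = U.map C * charmatrix A * V.map C := by
    unfold charmatrix
    rw [RingHom.mapMatrix_apply, RingHom.mapMatrix_apply, Matrix.map_mul, Matrix.map_mul,
      mul_sub, sub_mul]
    congr 1
    rw [← comm, mul_assoc, hmap, mul_one]
  rw [Matrix.charpoly, hc, det_mul, det_mul, mul_right_comm, ← det_mul, hmap, det_one, one_mul]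
  rfl

/-- Auxiliary: the characteristic polynomial of a real symmetric matrix splits with its
eigenvalues as roots. -/
lemma RicAux.herm_charpoly (A : Matrix (Fin 4) (Fin 4) ℝ) (hA : A.IsHermitian) :
    A.charpoly = ∏ i, (X - C (hA.eigenvalues i)) := by
  conv_lhs => rw [hA.spectral_theorem, Unitary.conjStarAlgAut_apply]
  rw [RicAux.charpoly_conj _ _ _ (Matrix.mem_unitaryGroup_iff.mp (hA.eigenvectorUnitary).2),
    Matrix.charpoly_of_upperTriangular _ (Matrix.blockTriangular_diagonal _)]
  simp [Matrix.diagonal_apply_eq]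

/-- Auxiliary: quadratic form of a vector vanishing in the first coordinate equals the
quadratic form of the corresponding submatrix. -/
lemma RicAux.quad_sub (A : Matrix (Fin 4) (Fin 4) ℝ) (x : Fin 4 → ℝ) (h0 : x 0 = 0) :
    x ⬝ᵥ A *ᵥ x =
      (fun k => x (![1,2,3] k)) ⬝ᵥ
        ((A.submatrix ![(1:Fin 4),2,3] ![1,2,3]) *ᵥ fun k => x (![1,2,3] k)) := by
  simp [dotProduct, mulVec, Fin.sum_univ_four, Fin.sum_univ_three, h0]

set_option maxHeartbeats 2000000 in
/-- For `β = 1`, `a > 0`, `b > 0` and all reals `c, d, f`, the 3×3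
submatrix `Ric₁` of `Ric(1,a,b,c,d,f)` obtained by deleting the first row and column,
namely `(1/2)·[[-8a²-b²-c², -cd, bd], [-cd, -8a²-b²-d², -bc], [bd, -bc, -12a²-c²-d²]]`,
is negative definite; consequently `Ric(1,a,b,c,d,f)` has at least three negative
eigenvalues counted with multiplicity. -/
theorem Ric_beta_one_submatrix_negdef (a b c d f : ℝ) (ha : 0 < a) (hb : 0 < b) :
    (Ric 1 a b c d f).submatrix ![1, 2, 3] ![1, 2, 3] =
      (1/2 : ℝ) • !![-8*a^2 - b^2 - c^2, -c*d, b*d;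
                     -c*d, -8*a^2 - b^2 - d^2, -b*c;
                     b*d, -b*c, -12*a^2 - c^2 - d^2] ∧
    (-(Ric 1 a b c d f).submatrix ![1, 2, 3] ![1, 2, 3]).PosDef ∧
    ∃ μ : Fin 4 → ℝ, Monotone μ ∧
      (Ric 1 a b c d f).charpoly = ∏ i, (X - C (μ i)) ∧
      μ 0 < 0 ∧ μ 1 < 0 ∧ μ 2 < 0 := by
  set A := Ric 1 a b c d f with hAdef
  have h1 : A.submatrix ![1, 2, 3] ![1, 2, 3] =
      (1/2 : ℝ) • !![-8*a^2 - b^2 - c^2, -c*d, b*d;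
                     -c*d, -8*a^2 - b^2 - d^2, -b*c;
                     b*d, -b*c, -12*a^2 - c^2 - d^2] := by
    ext i j
    fin_cases i <;> fin_cases j <;> simp [hAdef, Ric] <;> ring
  have hA : A.IsHermitian := by
    show _ = _
    ext i j
    fin_cases i <;> fin_cases j <;> simp [hAdef, Ric, Matrix.conjTranspose_apply]
  have hpd : (-(A.submatrix ![1, 2, 3] ![1, 2, 3])).PosDef := by
    rw [h1, Matrix.posDef_iff_dotProduct_mulVec]
    constructor
    · show _ = _
      ext i j
      fin_cases i <;> fin_cases j <;> simp [Matrix.conjTranspose_apply]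
    · intro x hx
      have hx' : x 0 ≠ 0 ∨ x 1 ≠ 0 ∨ x 2 ≠ 0 := by
        by_contra h
        push_neg at h
        exact hx (funext fun k => by fin_cases k <;> simp [h.1, h.2.1, h.2.2])
      have key : ∀ y : ℝ, y ≠ 0 → 0 < y^2 := fun y hy => by positivity
      have ha2 : 0 < a^2 := by positivity
      simp [dotProduct, mulVec, Fin.sum_univ_three]
      rcases hx' with h | h | h <;>
        nlinarith [mul_pos ha2 (key _ h), sq_nonneg (c*(x 0) + d*(x 1)),
          sq_nonneg (b*(x 0) - d*(x 2)), sq_nonneg (b*(x 1) + c*(x 2)),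
          sq_nonneg (x 0), sq_nonneg (x 1), sq_nonneg (x 2)]
  refine ⟨h1, hpd, ?_⟩
  -- key claim: at most one nonnegative eigenvalue
  have key : ∀ i j : Fin 4, i ≠ j → 0 ≤ hA.eigenvalues i → 0 ≤ hA.eigenvalues j → False := by
    intro i j hij hi hj
    set v : Fin 4 → (Fin 4 → ℝ) := fun k => ⇑(hA.eigenvectorBasis k) with hvdef
    have hortho : ∀ k l, v k ⬝ᵥ v l = if k = l then 1 else 0 := by
      intro k l
      have := orthonormal_iff_ite.mp hA.eigenvectorBasis.orthonormal k l
      simpa [PiLp.inner_apply, RCLike.inner_apply, dotProduct, mul_comm] using this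
    obtain ⟨α, γ, hαγ, h0⟩ : ∃ α γ : ℝ, ¬(α = 0 ∧ γ = 0) ∧ α * v i 0 + γ * v j 0 = 0 := by
      by_cases hp : v i 0 = 0
      · exact ⟨1, 0, by simp, by simp [hp]⟩
      · exact ⟨v j 0, -(v i 0), fun h => hp (neg_eq_zero.mp h.2), by ring⟩
    set x : Fin 4 → ℝ := α • v i + γ • v j with hxdef
    have hx0 : x 0 = 0 := by simpa [hxdef] using h0
    have hAx : A *ᵥ x = (α * hA.eigenvalues i) • v i + (γ * hA.eigenvalues j) • v j := by
      rw [hxdef, mulVec_add, mulVec_smul, mulVec_smul, hvdef]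
      simp only [hA.mulVec_eigenvectorBasis, smul_smul]
    have hQ : x ⬝ᵥ A *ᵥ x = α^2 * hA.eigenvalues i + γ^2 * hA.eigenvalues j := by
      rw [hAx, hxdef]
      simp only [dotProduct_add, add_dotProduct, dotProduct_smul, smul_dotProduct,
        smul_eq_mul, hortho, hij, hij.symm, if_true, if_false, if_neg hij, if_neg hij.symm,
        if_pos rfl]
      ring
    have hxx : x ⬝ᵥ x = α^2 + γ^2 := by
      rw [hxdef]
      simp only [dotProduct_add, add_dotProduct, dotProduct_smul, smul_dotProduct,
        smul_eq_mul, hortho, if_neg hij, if_neg hij.symm, if_pos rfl]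
      simp only [if_true]
      all_goals ring
    have hQnonneg : 0 ≤ x ⬝ᵥ A *ᵥ x := by
      rw [hQ]
      have := mul_nonneg (sq_nonneg α) hi
      have := mul_nonneg (sq_nonneg γ) hj
      linarith
    have hyne : (fun k => x (![1,2,3] k)) ≠ 0 := by
      intro hy
      have hx1 : x 1 = 0 := congrFun hy 0
      have hx2 : x 2 = 0 := congrFun hy 1
      have hx3 : x 3 = 0 := congrFun hy 2
      have hx4 : x = 0 := funext fun k => by fin_cases k <;> assumption
      have hpos : 0 < α^2 + γ^2 := by
        rcases not_and_or.mp hαγ with h | h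
        · nlinarith [sq_nonneg γ, (by positivity : (0:ℝ) < α^2)]
        · nlinarith [sq_nonneg α, (by positivity : (0:ℝ) < γ^2)]
      rw [hx4] at hxx
      simp at hxx
      linarith
    have hneg := hpd.dotProduct_mulVec_pos hyne
    rw [Matrix.neg_mulVec, dotProduct_neg] at hneg
    have hstar : star (fun k => x (![1,2,3] k)) = fun k => x (![1,2,3] k) := by
      funext k; simp
    rw [hstar] at hneg
    rw [RicAux.quad_sub A x hx0] at hQnonneg
    linarith
  -- sorted eigenvalues
  refine ⟨hA.eigenvalues ∘ Tuple.sort hA.eigenvalues, Tuple.monotone_sort _, ?_, ?_⟩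
  · rw [RicAux.herm_charpoly A hA]
    exact (Equiv.prod_comp (Tuple.sort hA.eigenvalues)
      fun i => X - C (hA.eigenvalues i)).symm
  · have hmono := Tuple.monotone_sort hA.eigenvalues
    have h2 : (hA.eigenvalues ∘ Tuple.sort hA.eigenvalues) 2 < 0 := by
      by_contra h
      push_neg at h
      have h3 : 0 ≤ (hA.eigenvalues ∘ Tuple.sort hA.eigenvalues) 3 :=
        h.trans (hmono (by decide : (2:Fin 4) ≤ 3))
      exact key _ _ ((Tuple.sort hA.eigenvalues).injective.ne (by decide)) h h3
    have h1' : (hA.eigenvalues ∘ Tuple.sort hA.eigenvalues) 1 < 0 :=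
      lt_of_le_of_lt (hmono (by decide : (1:Fin 4) ≤ 2)) h2
    have h0' : (hA.eigenvalues ∘ Tuple.sort hA.eigenvalues) 0 < 0 :=
      lt_of_le_of_lt (hmono (by decide : (0:Fin 4) ≤ 1)) h1'
    exact ⟨h0', h1', h2⟩
end
end

section
/- Let β ∈ (−1, −1/2] and let a > 0, b > 0, c, d, f be real numbers. If the symmetric matrix Ric(β,a,b,c,d,f) is negative semidefinite, then β = −1/2 and the eigenvalues λ₁ ≤ λ₂ ≤ λ₃ ≤ λ₄ of Ric(−1/2,a,b,c,d,f) satisfy λ₁ < 0, λ₂ < 0, λ₃ = λ₄ = 0. In particular, for β ∈ (−1, −1/2), the matrix Ric(β,a,b,c,d,f) always has at least one positive eigenvalue. -/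
open Matrix Polynomial

noncomputable section

/-- If `X² ≤ Y²` and `0 ≤ Y` then `-Y ≤ X`. -/
lemma neg_le_of_sq_le_sq (X Y : ℝ) (h : X^2 ≤ Y^2) (hY : 0 ≤ Y) : -Y ≤ X := by
  nlinarith [sq_nonneg (X + Y)]

/-- If a real quadratic `p t² + 2qt + r` is everywhere nonpositive, then `p ≤ 0`,
`r ≤ 0` and `q² ≤ pr`. -/
lemma aux_quad {p q r : ℝ} (h : ∀ t : ℝ, p*t^2 + 2*q*t + r ≤ 0) :
    p ≤ 0 ∧ r ≤ 0 ∧ q^2 ≤ p*r := by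
  have hr : r ≤ 0 := by have := h 0; linarith [this]
  have hp : p ≤ 0 := by
    by_contra hp
    push_neg at hp
    have hnn : (0:ℝ) ≤ (1 - r)/p := div_nonneg (by linarith) hp.le
    have ht := h (Real.sqrt ((1 - r)/p))
    have hq := h (-Real.sqrt ((1 - r)/p))
    rw [Real.sq_sqrt hnn] at ht
    rw [neg_pow, Real.sq_sqrt hnn] at hq
    have e : p * ((1-r)/p) = 1 - r := by field_simp
    simp only [pow_two] at ht hq
    nlinarith [ht, hq, e]
  refine ⟨hp, hr, ?_⟩
  rcases eq_or_lt_of_le hp with hp0 | hp0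
  · have hq0 : q = 0 := by
      by_contra hq
      have h1 := h ((1 - r)/(2*q))
      rw [← hp0] at h1
      have e : 2*q*((1-r)/(2*q)) = 1 - r := by field_simp
      nlinarith [h1]
    rw [hq0, hp0]
    norm_num
  · have h1 := h (-q/p)
    have hpne : p ≠ 0 := ne_of_lt hp0
    have e1 : p * (-q/p)^2 + 2*q*(-q/p) + r = -q^2/p + r := by field_simp; ring
    rw [e1] at h1
    have e2 : p * (-q^2/p + r) = -q^2 + p*r := by field_simp
    nlinarith [mul_nonneg (neg_nonneg.2 hp0.le) (neg_nonneg.2 h1), e2]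

set_option maxHeartbeats 1000000 in
/-- The key impossibility certificate used to rule out `0 < S`. -/
lemma bridge (β a c d S M w g : ℝ) (hβ1 : -1 < β) (hβ2 : β ≤ -(1/2)) (ha : 0 < a)
    (hw : 0 ≤ w) (hpos : 0 < S)
    (hgsq : g^2 = a^2*(3+β)^2*w)
    (hd2 : 4*a^2*(3+2*β)^2*d^2 ≤ S^2)
    (hc2 : c^2 ≤ w)
    (hgs : (c*d + g)^2 ≤ M*S)
    (hwS : S ≤ w)
    (hMle : M ≤ 12*a^2*(1+β)^2 - S)
    (hSle : S ≤ 12*a^2*(1+β)^2) : False := by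
  have h32 : (0:ℝ) < 3+2*β := by linarith
  have h3b : (0:ℝ) < 3+β := by linarith
  have hu : (0:ℝ) ≤ 1+β := by linarith
  have hv : (0:ℝ) ≤ -1-2*β := by linarith
  have t1 : c^2 * (4*a^2*(3+2*β)^2*d^2) ≤ w * S^2 :=
    mul_le_mul hc2 hd2 (by positivity) hw
  have hX2 : (2*(3+2*β)*(c*d)*g)^2 ≤ (w*S*(3+β))^2 := by
    have t2 : (c^2 * (4*a^2*(3+2*β)^2*d^2)) * ((3+β)^2*w) ≤ (w*S^2) * ((3+β)^2*w) :=
      mul_le_mul_of_nonneg_right t1 (by positivity)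
    have e : (2*(3+2*β)*(c*d)*g)^2 = (4*(3+2*β)^2*(c^2*d^2))*g^2 := by ring
    rw [e, hgsq]
    linarith [t2]
  have hY : (0:ℝ) ≤ w*S*(3+β) := by positivity
  have hcross : -(w*S*(3+β)) ≤ 2*(3+2*β)*(c*d)*g :=
    neg_le_of_sq_le_sq _ _ hX2 hY
  have hgsq' : (3+2*β)*g^2 = (3+2*β)*(a^2*(3+β)^2*w) := by rw [hgsq]
  have hkey : (3+2*β)*(a^2*(3+β)^2*w) ≤ (3+2*β)*(M*S) + w*S*(3+β) := by
    linarith [mul_le_mul_of_nonneg_left hgs h32.le, hcross,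
      mul_nonneg h32.le (sq_nonneg (c*d)), hgsq']
  have p1 : 0 ≤ ((12*a^2*(1+β)^2 - S - M) * S) * (3+2*β) :=
    mul_nonneg (mul_nonneg (by linarith) hpos.le) h32.le
  have hbr : S*(3+β) ≤ (3+2*β)*(a^2*(3+β)^2) := by
    have k1 := mul_le_mul_of_nonneg_right hSle h3b.le
    have k2 : 0 ≤ a^2*(3+β)*((1+β)*(-1-2*β)) :=
      mul_nonneg (mul_nonneg (sq_nonneg a) h3b.le) (mul_nonneg hu hv)
    have k3 : (0:ℝ) ≤ a^2*(3+β) := mul_nonneg (sq_nonneg a) h3b.le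
    linarith [k1, k2, k3]
  have p2 : 0 ≤ (w - S) * ((3+2*β)*(a^2*(3+β)^2) - S*(3+β)) :=
    mul_nonneg (by linarith) (by linarith)
  have hSE : 0 ≤ S * ((3+2*β)*(12*a^2*(1+β)^2) - (3+2*β)*S
      - (3+2*β)*(a^2*(3+β)^2) + S*(3+β)) := by
    nlinarith [hkey, p1, p2]
  have hE : 0 ≤ (3+2*β)*(12*a^2*(1+β)^2) - (3+2*β)*S
      - (3+2*β)*(a^2*(3+β)^2) + S*(3+β) :=
    (mul_nonneg_iff_of_pos_left hpos).mp hSE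
  have hΦ : (0:ℝ) < -10*β^3-45*β^2-48*β-9 := by
    nlinarith [mul_nonneg hu hv, mul_nonneg (mul_nonneg hu hu) hv]
  have hΦa : (0:ℝ) < a^2*(-10*β^3-45*β^2-48*β-9) := by positivity
  have hprod : (-β)*S ≤ (-β)*(12*a^2*(1+β)^2) :=
    mul_le_mul_of_nonneg_left hSle (by linarith)
  linarith [hE, hprod, hΦa]

set_option maxHeartbeats 1000000 in
/-- Core algebraic consequence of negative semidefiniteness. -/
lemma core (β a b c d f : ℝ) (hβ1 : -1 < β) (hβ2 : β ≤ -(1/2)) (ha : 0 < a) (hb : 0 < b)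
    (h11 : b^2+c^2+d^2-4*a^2*(1+β)^2 ≤ 0)
    (h22 : -2*a*(2*a*(1+β)) - b^2 - c^2 + f^2*(1-β)^2 ≤ 0)
    (h33 : -4*a^2*β*(1+β) - b^2 - d^2 - f^2*(1-β)^2 ≤ 0)
    (h13 : (-d*(a + 2*a*(1+β)))^2 ≤
      (b^2+c^2+d^2-4*a^2*(1+β)^2) * (-4*a^2*β*(1+β) - b^2 - d^2 - f^2*(1-β)^2))
    (h23 : (-c*d - a*f*(1-β)^2 - f*(2*a*(1+β))*(1-β))^2 ≤
      (-2*a*(2*a*(1+β)) - b^2 - c^2 + f^2*(1-β)^2) * (-4*a^2*β*(1+β) - b^2 - d^2 - f^2*(1-β)^2)) :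
    β = -(1/2) ∧ c = 0 ∧ d = 0 ∧ f = 0 ∧ b = a := by
  have hu : (0:ℝ) ≤ 1+β := by linarith
  have hv : (0:ℝ) ≤ -1-2*β := by linarith
  have hnn : (0:ℝ) ≤ 4*a^2*((1+β)*(-1-2*β)) :=
    mul_nonneg (by positivity) (mul_nonneg hu hv)
  have hP : 0 ≤ 4*a^2*(1+β)^2 - b^2 - c^2 - d^2 := by linarith
  have hR : 0 ≤ 4*a^2*β*(1+β) + b^2 + d^2 + f^2*(1-β)^2 := by linarith
  have hm : 0 ≤ 4*a^2*(1+β) + b^2 + c^2 - f^2*(1-β)^2 := by linarith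
  have hSnonneg : 0 ≤ 4*a^2*((1+β)*(1+2*β)) + f^2*(1-β)^2 - c^2 := by linarith
  have hS0 : 4*a^2*((1+β)*(1+2*β)) + f^2*(1-β)^2 - c^2 ≤ 0 := by
    by_contra hc'
    push_neg at hc'
    refine bridge β a c d (4*a^2*((1+β)*(1+2*β)) + f^2*(1-β)^2 - c^2)
      (4*a^2*(1+β) + b^2 + c^2 - f^2*(1-β)^2) (f^2*(1-β)^2) (a*f*(1-β)*(3+β))
      hβ1 hβ2 ha (by positivity) hc' (by ring) ?_ ?_ ?_ ?_ ?_ ?_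
    · linarith [h13, sq_nonneg ((4*a^2*(1+β)^2 - b^2 - c^2 - d^2) -
        (4*a^2*β*(1+β) + b^2 + d^2 + f^2*(1-β)^2))]
    · linarith [hc', hnn]
    · linarith [h23, mul_nonneg hm hP]
    · linarith [hnn, sq_nonneg c]
    · linarith [hP, sq_nonneg c, sq_nonneg d]
    · linarith [hP, hm, sq_nonneg c, sq_nonneg d]
  have hSeq : 4*a^2*((1+β)*(1+2*β)) + f^2*(1-β)^2 - c^2 = 0 := le_antisymm hS0 hSnonneg
  have e11 : b^2+c^2+d^2-4*a^2*(1+β)^2 = 0 := by linarith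
  have e33 : -4*a^2*β*(1+β) - b^2 - d^2 - f^2*(1-β)^2 = 0 := by linarith
  have hd0 : d = 0 := by
    rw [e11, e33, zero_mul] at h13
    have h0 : -d*(a + 2*a*(1+β)) = 0 := by
      have := sq_nonneg (-d*(a + 2*a*(1+β)))
      have h2 : (-d*(a + 2*a*(1+β)))^2 = 0 := le_antisymm h13 this
      exact pow_eq_zero_iff two_ne_zero |>.mp h2
    have h32 : (0:ℝ) < a + 2*a*(1+β) := by nlinarith
    have : (-d) * (a + 2*a*(1+β)) = 0 := by linarith [h0]
    rcases mul_eq_zero.1 this with h' | h'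
    · linarith
    · exact absurd h' (ne_of_gt h32)
  subst hd0
  have hf0 : f = 0 := by
    rw [e33] at h23
    have h2 : (f * (a*((1-β)*(3+β))))^2 ≤ 0 := by nlinarith [h23]
    have h0' : f * (a*((1-β)*(3+β))) = 0 :=
      pow_eq_zero_iff two_ne_zero |>.mp (le_antisymm h2 (sq_nonneg _))
    have hpos2 : (0:ℝ) < a*((1-β)*(3+β)) := by nlinarith
    rcases mul_eq_zero.1 h0' with h' | h'
    · exact h'
    · exact absurd h' (ne_of_gt hpos2)
  subst hf0
  have hc0 : c = 0 := by
    have h2 : c^2 ≤ 0 := by linarith [hSeq, hnn]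
    have h3 : c^2 = 0 := le_antisymm h2 (sq_nonneg c)
    exact pow_eq_zero_iff two_ne_zero |>.mp h3
  subst hc0
  have hβ : β = -(1/2) := by
    have h0 : a^2 * ((1+β)*(1+2*β)) = 0 := by linarith [hSeq]
    rcases mul_eq_zero.1 h0 with h' | h'
    · exact absurd h' (by positivity)
    · rcases mul_eq_zero.1 h' with h'' | h''
      · linarith
      · linarith
  subst hβ
  have hba : b = a := by
    have e : (a-b)*(a+b) = 0 := by linarith [e11]
    rcases mul_eq_zero.1 e with h' | h'
    · linarith
    · linarith
  exact ⟨rfl, rfl, rfl, rfl, hba⟩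

lemma quad13 (β a b c d f : ℝ) (h : (-Ric β a b c d f).PosSemidef) :
    ∀ t : ℝ, (b^2+c^2+d^2-4*a^2*(1+β)^2)*t^2 + 2*(-d*(a + 2*a*(1+β)))*t
      + (-4*a^2*β*(1+β) - b^2 - d^2 - f^2*(1-β)^2) ≤ 0 := by
  intro t
  have h2 := h.dotProduct_mulVec_nonneg ![t,0,1,0]
  simp [Ric, mulVec, dotProduct, Fin.sum_univ_four] at h2
  nlinarith [h2]

lemma quad23 (β a b c d f : ℝ) (h : (-Ric β a b c d f).PosSemidef) :
    ∀ t : ℝ, (-2*a*(2*a*(1+β)) - b^2 - c^2 + f^2*(1-β)^2)*t^2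
      + 2*(-c*d - a*f*(1-β)^2 - f*(2*a*(1+β))*(1-β))*t
      + (-4*a^2*β*(1+β) - b^2 - d^2 - f^2*(1-β)^2) ≤ 0 := by
  intro t
  have h2 := h.dotProduct_mulVec_nonneg ![0,t,1,0]
  simp [Ric, mulVec, dotProduct, Fin.sum_univ_four] at h2
  nlinarith [h2]

/-- Master rigidity lemma: negative semidefiniteness forces `β = -1/2`,
`c = d = f = 0` and `b = a`. -/
lemma key_lemma (β a b c d f : ℝ) (hβ1 : -1 < β) (hβ2 : β ≤ -(1/2)) (ha : 0 < a) (hb : 0 < b)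
    (h : (-Ric β a b c d f).PosSemidef) :
    β = -(1/2) ∧ c = 0 ∧ d = 0 ∧ f = 0 ∧ b = a := by
  obtain ⟨h11, h33, h13⟩ := aux_quad (quad13 β a b c d f h)
  obtain ⟨h22, -, h23⟩ := aux_quad (quad23 β a b c d f h)
  exact core β a b c d f hβ1 hβ2 ha hb h11 h22 h33 h13 h23

lemma charpoly_diag4 (v : Fin 4 → ℝ) :
    (Matrix.diagonal v).charpoly = ∏ i, (X - C (v i)) := by
  rw [Matrix.charpoly]
  have h : charmatrix (Matrix.diagonal v) = Matrix.diagonal (fun i => X - C (v i)) := by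
    ext i j
    by_cases hij : i = j
    · subst hij; simp [charmatrix_apply_eq]
    · simp [charmatrix_apply_ne _ _ _ hij, Matrix.diagonal_apply_ne _ hij,
        Matrix.diagonal_apply_ne v hij]
  rw [h, Matrix.det_diagonal]

lemma charpoly_conj4 (U : Matrix.unitaryGroup (Fin 4) ℝ) (D : Matrix (Fin 4) (Fin 4) ℝ) :
    ((U : Matrix (Fin 4) (Fin 4) ℝ) * D * star (U : Matrix (Fin 4) (Fin 4) ℝ)).charpoly
      = D.charpoly := by
  have hUU : (U : Matrix (Fin 4) (Fin 4) ℝ) * star (U : Matrix (Fin 4) (Fin 4) ℝ) = 1 :=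
    (Unitary.mem_iff.mp U.2).2
  set φ := ((C : ℝ →+* ℝ[X]).mapMatrix : Matrix (Fin 4) (Fin 4) ℝ →+* Matrix (Fin 4) (Fin 4) ℝ[X])
  have hcomm : ∀ A : Matrix (Fin 4) (Fin 4) ℝ[X],
      Matrix.scalar (Fin 4) (X : ℝ[X]) * A = A * Matrix.scalar (Fin 4) (X : ℝ[X]) :=
    fun A => (Matrix.scalar_commute (X : ℝ[X]) (fun r => Commute.all _ _) A)
  have key : charmatrix ((U : Matrix (Fin 4) (Fin 4) ℝ) * D * star (U : Matrix (Fin 4) (Fin 4) ℝ))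
      = φ (U : Matrix (Fin 4) (Fin 4) ℝ) * charmatrix D * φ (star (U : Matrix (Fin 4) (Fin 4) ℝ)) := by
    unfold charmatrix
    rw [mul_sub, sub_mul]
    congr 1
    · rw [← hcomm (φ (U : Matrix (Fin 4) (Fin 4) ℝ)), mul_assoc, ← map_mul φ, hUU]
      simp [φ]
    · rw [← map_mul φ, ← map_mul φ]
  rw [Matrix.charpoly, Matrix.charpoly, key, Matrix.det_mul, Matrix.det_mul]
  have h1 : (φ (U : Matrix (Fin 4) (Fin 4) ℝ)).det * (φ (star (U : Matrix (Fin 4) (Fin 4) ℝ))).det = 1 := by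
    rw [← Matrix.det_mul, ← map_mul φ, hUU]
    simp [φ]
  calc (φ (U:Matrix (Fin 4) (Fin 4) ℝ)).det * (charmatrix D).det * (φ (star (U:Matrix (Fin 4) (Fin 4) ℝ))).det
      = (charmatrix D).det * ((φ (U:Matrix (Fin 4) (Fin 4) ℝ)).det * (φ (star (U:Matrix (Fin 4) (Fin 4) ℝ))).det) := by ring
    _ = (charmatrix D).det := by rw [h1, mul_one]

/-- Lemma 2. Let `β ∈ (-1, -1/2]`, `a > 0`, `b > 0` and `c, d, f`
be real. If `Ric(β,a,b,c,d,f)` is negative semidefinite, then `β = -1/2` and the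
sorted eigenvalues satisfy `λ₁ < 0`, `λ₂ < 0`, `λ₃ = λ₄ = 0`.  In particular, for
`β ∈ (-1, -1/2)` the matrix `Ric(β,a,b,c,d,f)` always has a positive eigenvalue. -/
theorem Ric_negative_semidefinite_case (β a b c d f : ℝ)
    (hβ : -1 < β ∧ β ≤ -(1/2)) (ha : 0 < a) (hb : 0 < b) :
    ((-Ric β a b c d f).PosSemidef →
      β = -(1/2) ∧
      ∃ μ : Fin 4 → ℝ, Monotone μ ∧
        (Ric β a b c d f).charpoly = ∏ i, (X - C (μ i)) ∧
        μ 0 < 0 ∧ μ 1 < 0 ∧ μ 2 = 0 ∧ μ 3 = 0) ∧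
    (β < -(1/2) →
      ∃ μ : Fin 4 → ℝ, Monotone μ ∧
        (Ric β a b c d f).charpoly = ∏ i, (X - C (μ i)) ∧ 0 < μ 3) := by
  constructor
  · intro hpsd
    obtain ⟨hβ', hc, hd, hf, hba⟩ := key_lemma β a b c d f hβ.1 hβ.2 ha hb hpsd
    have hmat : Ric β a b c d f = Matrix.diagonal ![(0:ℝ), -(3/2)*a^2, 0, -(3/2)*a^2] := by
      rw [hβ', hc, hd, hf, hba]
      ext i j
      fin_cases i <;> fin_cases j <;>
        simp [Ric, Matrix.diagonal, Matrix.vecHead, Matrix.vecTail] <;> ring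
    have ha2 : (0:ℝ) < a^2 := by positivity
    refine ⟨hβ', ![-(3/2)*a^2, -(3/2)*a^2, 0, 0], ?_, ?_, ?_, ?_, ?_, ?_⟩
    · intro i j hij
      fin_cases i <;> fin_cases j <;>
        first
          | rfl
          | (exact absurd hij (by decide))
          | (show -(3/2)*a^2 ≤ -(3/2)*a^2; linarith)
          | (show -(3/2)*a^2 ≤ (0:ℝ); linarith)
          | (show (0:ℝ) ≤ (0:ℝ); linarith)
    · rw [hmat, charpoly_diag4]
      simp only [Fin.prod_univ_four, Matrix.cons_val_zero, Matrix.cons_val_one,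
        Matrix.head_cons, Matrix.cons_val_two, Matrix.tail_cons, Matrix.cons_val_three]
      ring
    · show -(3/2)*a^2 < 0; linarith
    · show -(3/2)*a^2 < 0; linarith
    · rfl
    · rfl
  · intro hβlt
    have hherm : (Ric β a b c d f).IsHermitian := by
      show (Ric β a b c d f)ᴴ = Ric β a b c d f
      ext i j
      fin_cases i <;> fin_cases j <;> rfl
    set ev := hherm.eigenvalues with hev
    set σ := Tuple.sort ev with hσ
    have hofr : Matrix.diagonal ((RCLike.ofReal : ℝ → ℝ) ∘ ev) = Matrix.diagonal ev := by
      simp only [RCLike.ofReal_real_eq_id, Function.id_comp]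
    refine ⟨ev ∘ σ, Tuple.monotone_sort ev, ?_, ?_⟩
    · have hchar : (Ric β a b c d f).charpoly = ∏ i, (X - C (ev i)) := by
        conv_lhs => rw [hherm.spectral_theorem]
        rw [Unitary.conjStarAlgAut_apply, hofr, charpoly_conj4, charpoly_diag4]
      rw [hchar]
      exact (Equiv.prod_comp σ (fun i => X - C (ev i))).symm
    · by_contra hle
      push_neg at hle
      have hall : ∀ i, ev i ≤ 0 := by
        intro i
        have h3 : σ.symm i ≤ (3 : Fin 4) := by
          rw [Fin.le_def]
          simpa using Nat.lt_succ_iff.mp (σ.symm i).isLt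
        have h1 : (ev ∘ σ) (σ.symm i) ≤ (ev ∘ σ) 3 := Tuple.monotone_sort ev h3
        have h2 : (ev ∘ σ) (σ.symm i) = ev i := by simp
        rw [h2] at h1
        exact h1.trans hle
      have hpsd : (-Ric β a b c d f).PosSemidef := by
        have hrepr : -Ric β a b c d f
            = (hherm.eigenvectorUnitary : Matrix (Fin 4) (Fin 4) ℝ)
              * Matrix.diagonal (fun i => -(ev i))
              * ((hherm.eigenvectorUnitary : Matrix (Fin 4) (Fin 4) ℝ))ᴴ := by
          have hneg : Matrix.diagonal (fun i => -(ev i)) = -Matrix.diagonal ev := by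
            ext i j
            by_cases hij : i = j
            · subst hij; simp
            · simp [Matrix.diagonal_apply_ne _ hij]
          rw [hneg, mul_neg, neg_mul]
          congr 1
          conv_lhs => rw [hherm.spectral_theorem]
          rw [hofr]
          rfl
        rw [hrepr]
        exact Matrix.PosSemidef.mul_mul_conjTranspose_same
          (Matrix.PosSemidef.diagonal (fun i => neg_nonneg.2 (hall i))) _
      obtain ⟨hβ', -⟩ := key_lemma β a b c d f hβ.1 hβ.2 ha hb hpsd
      rw [hβ'] at hβlt
      exact absurd hβlt (lt_irrefl _)
end
end
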